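/- Let d ≥ 2, set ε = 11^{−d}/2, and for n > 1 set k(n) = ⌊n/(30√d·log n)⌋ − 1. Let m_0 > 1 be such that for all m ≥ m_0: m > e^{4√d}, √m ≤ k(m), 2^{−√m} ≤ e^{−(log m)^d}, and ε > (3m)^d·(2^{−√m} + e^{−(log m)^d}). Let p : ℝ → ℝ satisfy 0 ≤ p(n) ≤ 1 for all n > 1, p(m) < ε for all m ∈ (1, m_0], and p(n) ≤ (n/log n)^d·(11^d·p(3·log n))^{k(n)} + (3n)^d·e^{−(log n)^d} for all n > m_0. Then p(n) < ε for every n > 1, and moreover p(n) ≤ 2·(3n)^d·e^{−(log n)^d} for every n > m_0. -/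

import Mathlib

/-!
Strong induction on `⌊n⌋`: for `n > m₀` the recursion only looks at `3 log n ≤ n - 1`, where
`p < ε = 11^{-d}/2` is already known, so the base `11^d p(3 log n)` of the power is at most `1/2`.
Since the exponent `k(n)` is at least `√n`, the first term is at most `(3n)^d 2^{-√n}`, and the
hypotheses on `m₀` turn this into both `p(n) < ε` and `p(n) ≤ 2 (3n)^d e^{-(log n)^d}`.
-/

noncomputable section

/-- `ε = 11^{−d}/2`. -/
def epsD (d : ℕ) : ℝ := ((11 : ℝ) ^ d)⁻¹ / 2

/-- `k(n) = ⌊n/(30√d·log n)⌋ − 1`. -/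
def kD (d : ℕ) (n : ℝ) : ℤ := ⌊n / (30 * Real.sqrt d * Real.log n)⌋ - 1

open Real

theorem Real.induction_of_le_sub_one {P : ℝ → Prop} (a : ℝ)
    (step : ∀ x, a < x → (∀ y, a < y → y ≤ x - 1 → P y) → P x) (x : ℝ) (hx : a < x) : P x := by
  induction h : ⌊x - a⌋₊ using Nat.strong_induction_on generalizing x with
  | _ N ih =>
    refine step x hx fun y hy hyx => ih ⌊y - a⌋₊ ?_ y hy rfl
    rw [← h, Nat.lt_iff_add_one_le, ← Nat.floor_add_one (by linarith)]
    exact Nat.floor_le_floor (by linarith)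

theorem three_mul_log_le_sub_one {n : ℝ} (hn : 0 < n) (hlog : 4 ≤ log n) :
    3 * log n ≤ n - 1 := by
  have := quadratic_le_exp_of_nonneg (by linarith : 0 ≤ log n)
  rw [exp_log hn] at this
  nlinarith

theorem zpow_le_two_rpow_neg {b x : ℝ} {k : ℤ} (hb0 : 0 ≤ b) (hb : b ≤ 1 / 2) (hx0 : 0 ≤ x)
    (hxk : x ≤ k) : b ^ k ≤ (2 : ℝ) ^ (-x) := by
  lift k to ℕ using (by exact_mod_cast hx0.trans hxk)
  calc b ^ (k : ℤ) = b ^ k := zpow_natCast b k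
    _ ≤ (1 / 2) ^ k := pow_le_pow_left₀ hb0 hb k
    _ = (2 : ℝ) ^ (-(k : ℝ)) := by rw [rpow_neg zero_le_two, rpow_natCast, one_div, inv_pow]
    _ ≤ (2 : ℝ) ^ (-x) := rpow_le_rpow_of_exponent_le one_le_two (by push_cast at hxk; linarith)

theorem eleven_pow_mul_lt_half {d : ℕ} {q : ℝ} (hq : q < epsD d) : (11 : ℝ) ^ d * q < 1 / 2 := by
  have h11 : (0 : ℝ) < 11 ^ d := by positivity
  calc (11 : ℝ) ^ d * q < 11 ^ d * epsD d := mul_lt_mul_of_pos_left hq h11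
    _ = 1 / 2 := by unfold epsD; field_simp

theorem div_log_pow_mul_zpow_le {d : ℕ} {n q : ℝ} {k : ℤ} (hn : 0 < n) (hlog : 1 ≤ 3 * log n)
    (hk : √n ≤ k) (hq0 : 0 ≤ q) (hq : q < epsD d) :
    (n / log n) ^ d * ((11 : ℝ) ^ d * q) ^ k ≤ (3 * n) ^ d * (2 : ℝ) ^ (-√n) := by
  have hdiv : n / log n ≤ 3 * n := by
    rw [div_le_iff₀ (by linarith)]
    nlinarith
  exact mul_le_mul (pow_le_pow_left₀ (div_nonneg hn.le (by linarith)) hdiv d)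
    (zpow_le_two_rpow_neg (by positivity) (eleven_pow_mul_lt_half hq).le (sqrt_nonneg n) hk)
    (zpow_nonneg (by positivity) k) (by positivity)

theorem statement17_general (d : ℕ) (hd : 2 ≤ d) (m₀ : ℝ)
    (h1 : ∀ m : ℝ, m₀ ≤ m → Real.exp (4 * Real.sqrt d) < m)
    (h2 : ∀ m : ℝ, m₀ ≤ m → Real.sqrt m ≤ (kD d m : ℝ))
    (h3 : ∀ m : ℝ, m₀ ≤ m →
      (2 : ℝ) ^ (-Real.sqrt m) ≤ Real.exp (-(Real.log m) ^ d))
    (h4 : ∀ m : ℝ, m₀ ≤ m →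
      (3 * m) ^ d * ((2 : ℝ) ^ (-Real.sqrt m) + Real.exp (-(Real.log m) ^ d))
        < epsD d)
    (p : ℝ → ℝ)
    (hp0 : ∀ n : ℝ, 1 < n → 0 ≤ p n)
    (hsmall : ∀ m : ℝ, 1 < m → m ≤ m₀ → p m < epsD d)
    (hrec : ∀ n : ℝ, m₀ < n →
      p n ≤ (n / Real.log n) ^ d * ((11 : ℝ) ^ d * p (3 * Real.log n)) ^ (kD d n)
        + (3 * n) ^ d * Real.exp (-(Real.log n) ^ d)) :
    (∀ n : ℝ, 1 < n → p n < epsD d) ∧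
    (∀ n : ℝ, m₀ < n → p n ≤ 2 * (3 * n) ^ d * Real.exp (-(Real.log n) ^ d)) := by
  have hpos : ∀ n, m₀ < n → 0 < n := fun n hn => (exp_pos _).trans (h1 n hn.le)
  have hlog : ∀ n, m₀ < n → 4 < log n := fun n hn => by
    have : 1 ≤ √(d : ℝ) := one_le_sqrt.mpr (by exact_mod_cast (by omega : 1 ≤ d))
    linarith [(lt_log_iff_exp_lt (hpos n hn)).mpr (h1 n hn.le)]
  have hbound : ∀ n, m₀ < n → p (3 * log n) < epsD d →
      p n ≤ (3 * n) ^ d * ((2 : ℝ) ^ (-√n) + exp (-(log n) ^ d)) := fun n hn hq => by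
    have := div_log_pow_mul_zpow_le (hpos n hn) (by linarith [hlog n hn]) (h2 n hn.le)
      (hp0 _ (by linarith [hlog n hn])) hq
    linarith [hrec n hn]
  have hlt_eps : ∀ n, 1 < n → p n < epsD d := by
    refine Real.induction_of_le_sub_one 1 fun n hn ih => ?_
    rcases le_or_gt n m₀ with hn₀ | hn₀
    · exact hsmall n hn hn₀
    refine (hbound n hn₀ (ih _ (by linarith [hlog n hn₀]) ?_)).trans_lt (h4 n hn₀.le)
    exact three_mul_log_le_sub_one (hpos n hn₀) (hlog n hn₀).le
  refine ⟨hlt_eps, fun n hn => ?_⟩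
  have hn0 := hpos n hn
  have hexp := mul_le_mul_of_nonneg_left (h3 n hn.le) (by positivity : (0 : ℝ) ≤ (3 * n) ^ d)
  linarith [hbound n hn (hlt_eps _ (by linarith [hlog n hn]))]

/-- Let `d ≥ 2`, set `ε = 11^{−d}/2`, and for `n > 1` set
`k(n) = ⌊n/(30√d·log n)⌋ − 1`. Let `m₀ > 1` be such that for all `m ≥ m₀`:
`m > e^{4√d}`, `√m ≤ k(m)`, `2^{−√m} ≤ e^{−(log m)^d}`, and
`ε > (3m)^d·(2^{−√m} + e^{−(log m)^d})`. Let `p : ℝ → ℝ` satisfy `0 ≤ p(n) ≤ 1`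
for all `n > 1`, `p(m) < ε` for all `m ∈ (1, m₀]`, and
`p(n) ≤ (n/log n)^d·(11^d·p(3·log n))^{k(n)} + (3n)^d·e^{−(log n)^d}` for all
`n > m₀`. Then `p(n) < ε` for every `n > 1`, and moreover
`p(n) ≤ 2·(3n)^d·e^{−(log n)^d}` for every `n > m₀`. -/
theorem statement17 (d : ℕ) (hd : 2 ≤ d) (m₀ : ℝ) (hm₀ : 1 < m₀)
    (h1 : ∀ m : ℝ, m₀ ≤ m → Real.exp (4 * Real.sqrt d) < m)
    (h2 : ∀ m : ℝ, m₀ ≤ m → Real.sqrt m ≤ (kD d m : ℝ))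
    (h3 : ∀ m : ℝ, m₀ ≤ m →
      (2 : ℝ) ^ (-Real.sqrt m) ≤ Real.exp (-(Real.log m) ^ d))
    (h4 : ∀ m : ℝ, m₀ ≤ m →
      (3 * m) ^ d * ((2 : ℝ) ^ (-Real.sqrt m) + Real.exp (-(Real.log m) ^ d))
        < epsD d)
    (p : ℝ → ℝ)
    (hp0 : ∀ n : ℝ, 1 < n → 0 ≤ p n) (hp1 : ∀ n : ℝ, 1 < n → p n ≤ 1)
    (hsmall : ∀ m : ℝ, 1 < m → m ≤ m₀ → p m < epsD d)
    (hrec : ∀ n : ℝ, m₀ < n →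
      p n ≤ (n / Real.log n) ^ d * ((11 : ℝ) ^ d * p (3 * Real.log n)) ^ (kD d n)
        + (3 * n) ^ d * Real.exp (-(Real.log n) ^ d)) :
    (∀ n : ℝ, 1 < n → p n < epsD d) ∧
    (∀ n : ℝ, m₀ < n → p n ≤ 2 * (3 * n) ^ d * Real.exp (-(Real.log n) ^ d)) :=
  statement17_general d hd m₀ h1 h2 h3 h4 p hp0 hsmall hrec
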